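/- arXiv:1102.1141 — 3 statements merged into one kernel-verified Lean document; each statement's English description precedes it below -/
import Mathlib

section
/- Let G be a finite simple graph that is a König-Egerváry graph, and let v be a vertex of G. If μ(G) = μ(G - v), then G - v is also a König-Egerváry graph and v belongs to core(G). -/
/-- A set of vertices is independent if no two of its vertices are adjacent. -/
def IsIndep {V : Type*} (G : SimpleGraph V) (s : Set V) : Prop :=
  ∀ u ∈ s, ∀ w ∈ s, ¬ G.Adj u w

open Classical in
/-- The independence number `α(G)`: the maximum cardinality of an independent set. -/
noncomputable def indepNum {V : Type*} (G : SimpleGraph V) [Fintype V] : ℕ :=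
  Nat.findGreatest (fun n => ∃ s : Set V, IsIndep G s ∧ s.ncard = n) (Fintype.card V)

/-- A matching: a set of edges of `G` that are pairwise vertex-disjoint. -/
def IsMatchingSet {V : Type*} (G : SimpleGraph V) (M : Finset (Sym2 V)) : Prop :=
  (↑M : Set (Sym2 V)) ⊆ G.edgeSet ∧
    ∀ e ∈ M, ∀ f ∈ M, e ≠ f → ∀ x : V, ¬(x ∈ e ∧ x ∈ f)

open Classical in
/-- The matching number `μ(G)`: the maximum cardinality of a matching. -/
noncomputable def matchNum {V : Type*} (G : SimpleGraph V) [Fintype V] : ℕ :=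
  Nat.findGreatest (fun n => ∃ M : Finset (Sym2 V), IsMatchingSet G M ∧ M.card = n)
    (Fintype.card V)

/-- A maximum independent set: an independent set of cardinality `α(G)`. -/
def IsMaxIndep {V : Type*} (G : SimpleGraph V) [Fintype V] (s : Set V) : Prop :=
  IsIndep G s ∧ s.ncard = indepNum G

/-- `core(G)`: the intersection of all maximum independent sets of `G`. -/
def core {V : Type*} (G : SimpleGraph V) [Fintype V] : Set V :=
  {v : V | ∀ s : Set V, IsMaxIndep G s → v ∈ s}

/-- `G` is a König-Egerváry graph if `α(G) + μ(G) = |V(G)|`. -/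
def IsKonigEgervary {V : Type*} (G : SimpleGraph V) [Fintype V] : Prop :=
  indepNum G + matchNum G = Fintype.card V

/-- `G - v`: the subgraph of `G` induced on `V \ {v}`. -/
def deleteVert {V : Type*} (G : SimpleGraph V) (v : V) : SimpleGraph {u : V // u ≠ v} :=
  SimpleGraph.comap Subtype.val G

/-- A perfect matching: a matching covering all vertices of `G`. -/
def HasPerfectMatching {V : Type*} (G : SimpleGraph V) : Prop :=
  ∃ M : Finset (Sym2 V), IsMatchingSet G M ∧ ∀ v : V, ∃ e ∈ M, v ∈ e

/-- `N(A)`: the set of all vertices adjacent to some vertex of `A`. -/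
def nbhd {V : Type*} (G : SimpleGraph V) (A : Set V) : Set V :=
  {w : V | ∃ u ∈ A, G.Adj u w}

/-!
Any independent set and any matching together use at most `|V|` vertices, since every matching
edge has an endpoint outside the independent set; so `α + μ ≤ |V|` for every graph. Deleting `v`
lowers `α` by at most one, and by exactly one if some maximum independent set of `G` avoids `v`.
With `μ(G - v) = μ(G)` and `α(G) + μ(G) = |V|`, the bound `α(G - v) + μ(G - v) ≤ |V| - 1` forces
`α(G - v) = α(G) - 1`: hence `G - v` is König-Egerváry and no maximum independent set avoids `v`.
-/

section

variable {W : Type*} {H : SimpleGraph W}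

open Classical in
theorem IsIndep.ncard_le_indepNum [Fintype W] {s : Set W} (hs : IsIndep H s) :
    s.ncard ≤ indepNum H :=
  Nat.le_findGreatest (Nat.card_eq_fintype_card (α := W) ▸ Set.ncard_le_card s) ⟨s, hs, rfl⟩

open Classical in
theorem exists_isMaxIndep [Fintype W] (H : SimpleGraph W) : ∃ s : Set W, IsMaxIndep H s :=
  Nat.findGreatest_spec (P := fun n => ∃ s : Set W, IsIndep H s ∧ s.ncard = n) (Nat.zero_le _)
    ⟨∅, by simp [IsIndep]⟩

open Classical in
theorem exists_isMatchingSet_card_eq_matchNum [Fintype W] (H : SimpleGraph W) :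
    ∃ M : Finset (Sym2 W), IsMatchingSet H M ∧ M.card = matchNum H :=
  Nat.findGreatest_spec (P := fun n => ∃ M : Finset (Sym2 W), IsMatchingSet H M ∧ M.card = n)
    (Nat.zero_le _) ⟨∅, by simp [IsMatchingSet]⟩

theorem IsIndep.exists_mem_notMem_of_mem_edgeSet {s : Set W} (hs : IsIndep H s) {e : Sym2 W}
    (he : e ∈ H.edgeSet) : ∃ x ∈ e, x ∉ s := by
  induction e using Sym2.ind with
  | _ x y =>
    by_contra! hxy
    exact hs x (hxy x (Sym2.mem_mk_left x y)) y (hxy y (Sym2.mem_mk_right x y)) he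

theorem IsIndep.ncard_add_card_le [Fintype W] {s : Set W} (hs : IsIndep H s)
    {M : Finset (Sym2 W)} (hM : IsMatchingSet H M) : s.ncard + M.card ≤ Fintype.card W := by
  have hout : ∀ e : M, ∃ x : ↥sᶜ, x.1 ∈ e.1 := fun e => by
    obtain ⟨x, hxe, hxs⟩ := hs.exists_mem_notMem_of_mem_edgeSet (hM.1 e.2)
    exact ⟨⟨x, hxs⟩, hxe⟩
  choose f hf using hout
  have hf_inj : Function.Injective f := fun e e' hee' => by
    by_contra hne
    exact hM.2 e e.2 e' e'.2 (Subtype.coe_ne_coe.mpr hne) _ ⟨hf e, hee' ▸ hf e'⟩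
  have hM_le : M.card ≤ sᶜ.ncard := by
    simpa [Nat.card_eq_fintype_card, Nat.card_coe_set_eq] using
      Nat.card_le_card_of_injective f hf_inj
  have h_compl := Set.ncard_add_ncard_compl s
  rw [Nat.card_eq_fintype_card] at h_compl
  omega

theorem indepNum_add_matchNum_le [Fintype W] (H : SimpleGraph W) :
    indepNum H + matchNum H ≤ Fintype.card W := by
  obtain ⟨s, hs, hs_card⟩ := exists_isMaxIndep H
  obtain ⟨M, hM, hM_card⟩ := exists_isMatchingSet_card_eq_matchNum H
  rw [← hs_card, ← hM_card]
  exact hs.ncard_add_card_le hM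

end

section deleteVert

variable {V : Type*} {G : SimpleGraph V} {v : V}

theorem card_subtype_ne [Fintype V] [DecidableEq V] (v : V) :
    Fintype.card {u : V // u ≠ v} = Fintype.card V - 1 := by
  convert Set.card_ne_eq v

theorem IsIndep.preimage_val {s : Set V} (hs : IsIndep G s) :
    IsIndep (deleteVert G v) (Subtype.val ⁻¹' s) :=
  fun u hu w hw => hs u hu w hw

theorem ncard_preimage_val_ne (s : Set V) :
    (Subtype.val ⁻¹' s : Set {u : V // u ≠ v}).ncard = (s \ {v}).ncard := by
  rw [← Set.ncard_image_of_injective _ Subtype.val_injective, Set.image_preimage_eq_inter_range,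
    Subtype.range_coe_subtype]
  rfl

variable [Fintype V] [DecidableEq V]

theorem indepNum_sub_one_le_indepNum_deleteVert (G : SimpleGraph V) (v : V) :
    indepNum G - 1 ≤ indepNum (deleteVert G v) := by
  obtain ⟨S, hS, hS_card⟩ := exists_isMaxIndep G
  have h_restrict := (hS.preimage_val (v := v)).ncard_le_indepNum
  rw [ncard_preimage_val_ne] at h_restrict
  have h_erase := Set.pred_ncard_le_ncard_sdiff_singleton S v
  omega

theorem IsMaxIndep.indepNum_le_indepNum_deleteVert {S : Set V} (hS : IsMaxIndep G S)
    (hv : v ∉ S) : indepNum G ≤ indepNum (deleteVert G v) := by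
  have := (hS.1.preimage_val (v := v)).ncard_le_indepNum
  rwa [ncard_preimage_val_ne, Set.sdiff_singleton_eq_self hv, hS.2] at this

end deleteVert

theorem stmt_0 {V : Type*} [Fintype V] [DecidableEq V] (G : SimpleGraph V)
    (hKE : IsKonigEgervary G) (v : V)
    (h : matchNum G = matchNum (deleteVert G v)) :
    IsKonigEgervary (deleteVert G v) ∧ v ∈ core G := by
  have hV : 1 ≤ Fintype.card V := Fintype.card_pos_iff.mpr ⟨v⟩
  have h_upper := indepNum_add_matchNum_le (deleteVert G v)
  have h_lower := indepNum_sub_one_le_indepNum_deleteVert G v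
  rw [card_subtype_ne] at h_upper
  unfold IsKonigEgervary at hKE ⊢
  refine ⟨by rw [card_subtype_ne]; omega, fun S hS => ?_⟩
  by_contra hv
  have h_avoid := hS.indepNum_le_indepNum_deleteVert hv
  omega
end

section
/- Let G be a finite simple bipartite graph and let v be a vertex of G. Then v belongs to core(G) if and only if μ(G) = μ(G - v). -/
section Aux
open Classical

variable {V : Type*} [Fintype V]

lemma indep_ncard_le {G : SimpleGraph V} {s : Set V} (hs : IsIndep G s) :
    s.ncard ≤ indepNum G := by
  classical
  apply Nat.le_findGreatest
  · calc s.ncard ≤ (Set.univ : Set V).ncard :=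
        Set.ncard_le_ncard (Set.subset_univ s) Set.finite_univ
      _ = Fintype.card V := by rw [Set.ncard_univ, Nat.card_eq_fintype_card]
  · exact ⟨s, hs, rfl⟩

lemma exists_maxIndep (G : SimpleGraph V) : ∃ s : Set V, IsMaxIndep G s := by
  classical
  have h0 : (fun n => ∃ s : Set V, IsIndep G s ∧ s.ncard = n) 0 :=
    ⟨∅, fun u hu => absurd hu (Set.notMem_empty u), by simp⟩
  exact Nat.findGreatest_spec (P := fun n => ∃ s : Set V, IsIndep G s ∧ s.ncard = n)
    (Nat.zero_le _) h0

lemma matching_card_le {G : SimpleGraph V} {M : Finset (Sym2 V)} (hM : IsMatchingSet G M) :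
    M.card ≤ matchNum G := by
  classical
  apply Nat.le_findGreatest
  · apply Finset.card_le_card_of_injOn (fun e => (Quot.out e).1) (fun _ _ => Finset.mem_univ _)
    intro e he f hf hef
    by_contra hne
    refine hM.2 e he f hf hne (Quot.out e).1 ⟨Sym2.out_fst_mem e, ?_⟩
    have : (Quot.out e).1 = (Quot.out f).1 := hef
    rw [this]
    exact Sym2.out_fst_mem f
  · exact ⟨M, hM, rfl⟩

lemma exists_maxMatching (G : SimpleGraph V) :
    ∃ M : Finset (Sym2 V), IsMatchingSet G M ∧ M.card = matchNum G := by
  classical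
  have h0 : (fun n => ∃ M : Finset (Sym2 V), IsMatchingSet G M ∧ M.card = n) 0 :=
    ⟨∅, ⟨by simp, by simp⟩, by simp⟩
  exact Nat.findGreatest_spec (P := fun n => ∃ M : Finset (Sym2 V), IsMatchingSet G M ∧ M.card = n)
    (Nat.zero_le _) h0

end Aux

section Del
variable {V : Type*} [Fintype V] [DecidableEq V] {G : SimpleGraph V} {v : V}

lemma indep_image_of_del {s' : Set {u : V // u ≠ v}} (h : IsIndep (deleteVert G v) s') :
    IsIndep G (Subtype.val '' s') := by
  rintro u ⟨u', hu', rfl⟩ w ⟨w', hw', rfl⟩ hadj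
  exact h u' hu' w' hw' hadj

lemma indep_preimage_of_del {s : Set V} (h : IsIndep G s) :
    IsIndep (deleteVert G v) {x : {u : V // u ≠ v} | x.1 ∈ s} := by
  intro u hu w hw hadj
  exact h u.1 hu w.1 hw hadj

lemma image_preimage_del (s : Set V) :
    Subtype.val '' {x : {u : V // u ≠ v} | x.1 ∈ s} = s \ {v} := by
  ext x
  constructor
  · rintro ⟨x', hx', rfl⟩; exact ⟨hx', x'.2⟩
  · rintro ⟨hxs, hxv⟩; exact ⟨⟨x, hxv⟩, hxs, rfl⟩

lemma alpha_del_le : indepNum (deleteVert G v) ≤ indepNum G := by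
  obtain ⟨s', hs', hc⟩ := exists_maxIndep (deleteVert G v)
  calc indepNum (deleteVert G v) = s'.ncard := hc.symm
    _ = (Subtype.val '' s').ncard := (Set.ncard_image_of_injective s' Subtype.val_injective).symm
    _ ≤ indepNum G := indep_ncard_le (indep_image_of_del hs')

lemma alpha_le_alpha_del_succ : indepNum G ≤ indepNum (deleteVert G v) + 1 := by
  obtain ⟨s, hs, hc⟩ := exists_maxIndep G
  have h1 : (s \ {v}).ncard = ({x : {u : V // u ≠ v} | x.1 ∈ s} : Set _).ncard := by
    rw [← image_preimage_del s, Set.ncard_image_of_injective _ Subtype.val_injective]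
  have h2 : ({x : {u : V // u ≠ v} | x.1 ∈ s} : Set _).ncard ≤ indepNum (deleteVert G v) :=
    indep_ncard_le (indep_preimage_of_del hs)
  have h3 : s.ncard ≤ (s \ {v}).ncard + 1 := by
    calc s.ncard ≤ ((s \ {v}) ∪ {v}).ncard :=
          Set.ncard_le_ncard (fun x hx => by by_cases hxv : x = v <;> simp [hxv, hx])
            (Set.toFinite _)
      _ ≤ (s \ {v}).ncard + ({v} : Set V).ncard := Set.ncard_union_le _ _
      _ = (s \ {v}).ncard + 1 := by rw [Set.ncard_singleton]
  omega

lemma not_core_iff_alpha_del :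
    v ∉ core G ↔ indepNum (deleteVert G v) = indepNum G := by
  constructor
  · intro hv
    simp only [core, Set.mem_setOf_eq, not_forall] at hv
    obtain ⟨s, hmax, hvs⟩ := hv
    have h1 : (s \ {v}) = s := Set.diff_singleton_eq_self hvs
    have h2 : ({x : {u : V // u ≠ v} | x.1 ∈ s} : Set _).ncard = s.ncard := by
      rw [← Set.ncard_image_of_injective _ Subtype.val_injective, image_preimage_del, h1]
    have h3 := indep_ncard_le (indep_preimage_of_del (v := v) hmax.1)
    have h4 := alpha_del_le (G := G) (v := v)
    have h5 := hmax.2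
    omega
  · intro heq
    intro hcore
    obtain ⟨s', hs', hc⟩ := exists_maxIndep (deleteVert G v)
    have hmax : IsMaxIndep G (Subtype.val '' s') := by
      refine ⟨indep_image_of_del hs', ?_⟩
      rw [Set.ncard_image_of_injective s' Subtype.val_injective, hc, heq]
    have := hcore (Subtype.val '' s') hmax
    obtain ⟨x', _, hx⟩ := this
    exact x'.2 hx

end Del

section KE
variable {V : Type*} [Fintype V]

lemma ke_le (G : SimpleGraph V) : indepNum G + matchNum G ≤ Fintype.card V := by
  classical
  obtain ⟨s, hs, hsc⟩ := exists_maxIndep G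
  obtain ⟨M, hM, hMc⟩ := exists_maxMatching G
  have hfree : ∀ e ∈ M, ∃ x, x ∈ e ∧ x ∉ s := by
    intro e he
    have hedge : e ∈ G.edgeSet := hM.1 he
    induction e using Sym2.ind with
    | _ x y =>
      rw [SimpleGraph.mem_edgeSet] at hedge
      by_cases hx : x ∈ s
      · exact ⟨y, Sym2.mem_mk_right x y, fun hy => hs x hx y hy hedge⟩
      · exact ⟨x, Sym2.mem_mk_left x y, hx⟩
  choose g hg1 hg2 using hfree
  have hinj : ∀ e ∈ M.attach, (fun e : {e // e ∈ M} => g e.1 e.2) e ∈ s.toFinsetᶜ ∧ True := by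
    intro e _
    simp only [Finset.mem_compl, Set.mem_toFinset]
    exact ⟨hg2 e.1 e.2, trivial⟩
  have hcard : M.attach.card ≤ s.toFinsetᶜ.card := by
    apply Finset.card_le_card_of_injOn (fun e : {e // e ∈ M} => g e.1 e.2)
    · intro e he
      exact (hinj e he).1
    · intro e _ f _ hef
      by_contra hne
      have hne' : e.1 ≠ f.1 := fun h => hne (Subtype.ext h)
      refine hM.2 e.1 e.2 f.1 f.2 hne' (g e.1 e.2) ⟨hg1 e.1 e.2, ?_⟩
      have heq : g e.1 e.2 = g f.1 f.2 := hef
      rw [heq]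
      exact hg1 f.1 f.2
  rw [Finset.card_attach] at hcard
  rw [Finset.card_compl] at hcard
  have hsn : s.ncard = s.toFinset.card := Set.ncard_eq_toFinset_card' s
  have hstc : s.toFinset.card ≤ Fintype.card V := Finset.card_le_univ _
  omega

end KE

section Konig
open Classical in
lemma konig_ge {V : Type*} [Fintype V] (G : SimpleGraph V)
    (hBip : ∃ A B : Set V, IsIndep G A ∧ IsIndep G B ∧ A ∪ B = Set.univ ∧ A ∩ B = ∅) :
    Fintype.card V ≤ indepNum G + matchNum G := by
  classical
  obtain ⟨A, B, hA, hB, hU, hI⟩ := hBip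
  have hAB : ∀ x, x ∈ A → x ∈ B → False := by
    intro x h1 h2
    have : x ∈ A ∩ B := ⟨h1, h2⟩
    rw [hI] at this
    exact this
  have hnbrB : ∀ a ∈ A, ∀ w, G.Adj a w → w ∈ B := by
    intro a ha w hadj
    have hw : w ∈ A ∪ B := by rw [hU]; trivial
    rcases hw with h | h
    · exact absurd hadj (hA a ha w h)
    · exact h
  have hABcard : A.ncard + B.ncard = Fintype.card V := by
    rw [← Set.ncard_union_eq (Set.disjoint_iff_inter_eq_empty.mpr hI)
      (Set.toFinite A) (Set.toFinite B), hU, Set.ncard_univ, Nat.card_eq_fintype_card]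
  set ιA := {x : V // x ∈ A} with hιA
  let Ns : Finset ιA → Finset V := fun s => Finset.univ.filter (fun w => ∃ a ∈ s, G.Adj a.1 w)
  have hNsB : ∀ s : Finset ιA, ∀ w ∈ Ns s, w ∈ B := by
    intro s w hw
    obtain ⟨a, _, hadj⟩ := (Finset.mem_filter.mp hw).2
    exact hnbrB a.1 a.2 w hadj
  set d : ℕ := Finset.univ.sup (fun s : Finset ιA => s.card - (Ns s).card) with hd
  -- Step 2: an independent set of size ≥ |B| + d
  have hindep : B.ncard + d ≤ indepNum G := by
    obtain ⟨s₀, -, hs₀⟩ := Finset.exists_mem_eq_sup (Finset.univ : Finset (Finset ιA))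
      ⟨∅, Finset.mem_univ ∅⟩ (fun s => s.card - (Ns s).card)
    rw [← hd] at hs₀
    by_cases hd0 : d = 0
    · have := indep_ncard_le hB
      omega
    · have hlt : (Ns s₀).card < s₀.card := by omega
      set T : Set V := (↑(s₀.image (Subtype.val)) : Set V) ∪ (B \ ↑(Ns s₀)) with hT
      have hS₁A : ∀ x ∈ (s₀.image (Subtype.val) : Finset V), x ∈ A := by
        intro x hx
        obtain ⟨a, _, rfl⟩ := Finset.mem_image.mp hx
        exact a.2
      have hTindep : IsIndep G T := by
        rintro u hu w hw hadj
        rcases Set.mem_union _ _ _ |>.mp hu with hu' | hu' <;>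
          rcases Set.mem_union _ _ _ |>.mp hw with hw' | hw'
        · exact hA u (hS₁A u (Finset.mem_coe.mp hu')) w (hS₁A w (Finset.mem_coe.mp hw')) hadj
        · obtain ⟨a, ha, rfl⟩ := Finset.mem_image.mp (Finset.mem_coe.mp hu')
          have : w ∈ Ns s₀ := Finset.mem_filter.mpr ⟨Finset.mem_univ w, ⟨a, ha, hadj⟩⟩
          exact hw'.2 this
        · obtain ⟨a, ha, rfl⟩ := Finset.mem_image.mp (Finset.mem_coe.mp hw')
          have : u ∈ Ns s₀ := Finset.mem_filter.mpr ⟨Finset.mem_univ u, ⟨a, ha, hadj.symm⟩⟩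
          exact hu'.2 this
        · exact hB u hu'.1 w hw'.1 hadj
      have hdisjT : Disjoint (↑(s₀.image (Subtype.val)) : Set V) (B \ ↑(Ns s₀)) := by
        rw [Set.disjoint_left]
        intro x hx hxB
        exact hAB x (hS₁A x (Finset.mem_coe.mp hx)) hxB.1
      have hNssub : (↑(Ns s₀) : Set V) ⊆ B := fun w hw => hNsB s₀ w (Finset.mem_coe.mp hw)
      have hc1 : (↑(s₀.image (Subtype.val)) : Set V).ncard = s₀.card := by
        rw [Set.ncard_coe_finset, Finset.card_image_of_injective _ Subtype.val_injective]
      have hc2 : (B \ ↑(Ns s₀)).ncard = B.ncard - (Ns s₀).card := by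
        rw [Set.ncard_diff hNssub, Set.ncard_coe_finset]
      have hc3 : T.ncard = s₀.card + (B.ncard - (Ns s₀).card) := by
        rw [hT, Set.ncard_union_eq hdisjT (Set.toFinite _) (Set.toFinite _), hc1, hc2]
      have hNB : (Ns s₀).card ≤ B.ncard := by
        have := Set.ncard_le_ncard hNssub (Set.toFinite B)
        rwa [Set.ncard_coe_finset] at this
      have hTle := indep_ncard_le hTindep
      omega
  -- Step 1: a matching of size ≥ |A| - d
  have hmatch : A.ncard - d ≤ matchNum G := by
    let t : ιA → Finset (V ⊕ Fin d) := fun a =>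
      ((Finset.univ.filter (fun w => G.Adj a.1 w)).image Sum.inl) ∪
        (Finset.univ.image (Sum.inr : Fin d → V ⊕ Fin d))
    have hHall : ∀ s : Finset ιA, s.card ≤ (s.biUnion t).card := by
      intro s
      rcases s.eq_empty_or_nonempty with rfl | ⟨a0, ha0⟩
      · simp
      · have hsub : (Ns s).image Sum.inl ∪
            (Finset.univ.image (Sum.inr : Fin d → V ⊕ Fin d)) ⊆ s.biUnion t := by
          intro x hx
          rcases Finset.mem_union.mp hx with hx | hx
          · obtain ⟨w, hw, rfl⟩ := Finset.mem_image.mp hx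
            obtain ⟨a, ha, hadj⟩ := (Finset.mem_filter.mp hw).2
            exact Finset.mem_biUnion.mpr ⟨a, ha, Finset.mem_union_left _
              (Finset.mem_image.mpr ⟨w, Finset.mem_filter.mpr ⟨Finset.mem_univ w, hadj⟩, rfl⟩)⟩
          · exact Finset.mem_biUnion.mpr ⟨a0, ha0, Finset.mem_union_right _ hx⟩
        have hdisj : Disjoint ((Ns s).image (Sum.inl : V → V ⊕ Fin d))
            (Finset.univ.image (Sum.inr : Fin d → V ⊕ Fin d)) := by
          rw [Finset.disjoint_left]
          rintro x hx hx'
          obtain ⟨w, _, rfl⟩ := Finset.mem_image.mp hx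
          obtain ⟨i, _, hi⟩ := Finset.mem_image.mp hx'
          exact Sum.inr_ne_inl hi
        have hcard : ((Ns s).image Sum.inl ∪
            Finset.univ.image (Sum.inr : Fin d → V ⊕ Fin d)).card = (Ns s).card + d := by
          rw [Finset.card_union_of_disjoint hdisj,
            Finset.card_image_of_injective _ Sum.inl_injective,
            Finset.card_image_of_injective _ Sum.inr_injective,
            Finset.card_univ, Fintype.card_fin]
        have hdle : s.card - (Ns s).card ≤ d :=
          hd ▸ Finset.le_sup (f := fun s : Finset ιA => s.card - (Ns s).card)
            (Finset.mem_univ s)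
        have hle := Finset.card_le_card hsub
        rw [hcard] at hle
        omega
    obtain ⟨f, hfinj, hft⟩ := (Finset.all_card_le_biUnion_card_iff_exists_injective t).mp hHall
    set L : Finset ιA := Finset.univ.filter (fun a => (f a).isLeft) with hL
    have hpartner : ∀ a : ιA, a ∈ L → ∃ w : V, f a = Sum.inl w ∧ G.Adj a.1 w := by
      intro a ha
      have hLa := (Finset.mem_filter.mp ha).2
      rcases hfa : f a with w | i
      · refine ⟨w, rfl, ?_⟩
        have hta := hft a
        rw [hfa] at hta
        rcases Finset.mem_union.mp hta with h | h
        · obtain ⟨w', hw', hww⟩ := Finset.mem_image.mp h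
          have hww' : w' = w := Sum.inl_injective hww
          subst hww'
          exact (Finset.mem_filter.mp hw').2
        · obtain ⟨i, _, hi⟩ := Finset.mem_image.mp h
          exact absurd hi (Sum.inr_ne_inl)
      · rw [hfa] at hLa
        simp at hLa
    choose pw hpw1 hpw2 using hpartner
    have hpwB : ∀ (a : ιA) (h : a ∈ L), pw a h ∈ B := fun a h => hnbrB a.1 a.2 _ (hpw2 a h)
    set M : Finset (Sym2 V) := L.attach.image (fun a => s(a.1.1, pw a.1 a.2)) with hM
    have hMmem : ∀ e ∈ M, ∃ (a : ιA) (h : a ∈ L), e = s(a.1, pw a h) := by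
      intro e he
      obtain ⟨a, _, rfl⟩ := Finset.mem_image.mp he
      exact ⟨a.1, a.2, rfl⟩
    have hMmatch : IsMatchingSet G M := by
      constructor
      · intro e he
        obtain ⟨a, h, rfl⟩ := hMmem e he
        exact hpw2 a h
      · intro e he e' he' hne x hx
        obtain ⟨a, h, rfl⟩ := hMmem e he
        obtain ⟨a', h', rfl⟩ := hMmem e' he'
        obtain ⟨hx1, hx2⟩ := hx
        rw [Sym2.mem_iff] at hx1 hx2
        have key : a = a' := by
          rcases hx1 with rfl | rfl
          · rcases hx2 with h12 | h12
            · exact Subtype.ext h12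
            · exact (hAB a.1 a.2 (by rw [h12]; exact hpwB a' h')).elim
          · rcases hx2 with h12 | h12
            · exact (hAB a'.1 a'.2 (by rw [← h12]; exact hpwB a h)).elim
            · apply hfinj
              rw [hpw1 a h, hpw1 a' h', h12]
        subst key
        exact hne rfl
    have hMcard : M.card = L.card := by
      rw [hM, Finset.card_image_of_injOn, Finset.card_attach]
      intro a _ a' _ heq
      simp only [Sym2.eq_iff] at heq
      rcases heq with ⟨h1, h2⟩ | ⟨h1, h2⟩
      · exact Subtype.ext (Subtype.ext h1)
      · exact (hAB a.1.1 a.1.2 (by rw [h1]; exact hpwB a'.1 a'.2)).elim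
    have hR : (Finset.univ.filter (fun a : ιA => ¬ (f a).isLeft)).card ≤ d := by
      have : ((Finset.univ : Finset (Fin d)).image (some : Fin d → Option (Fin d))).card = d := by
        rw [Finset.card_image_of_injective _ (Option.some_injective _),
          Finset.card_univ, Fintype.card_fin]
      have hle2 : (Finset.univ.filter (fun a : ιA => ¬ (f a).isLeft)).card ≤
          ((Finset.univ : Finset (Fin d)).image (some : Fin d → Option (Fin d))).card := by
        apply Finset.card_le_card_of_injOn (fun a => (f a).getRight?)
        · intro a ha
          have hna := (Finset.mem_filter.mp ha).2
          rcases hfa : f a with w | i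
          · rw [hfa] at hna; simp at hna
          · simp [hfa]
        · intro a ha a' ha' heq
          have hna := (Finset.mem_filter.mp (Finset.mem_coe.mp ha)).2
          have hna' := (Finset.mem_filter.mp (Finset.mem_coe.mp ha')).2
          rcases hfa : f a with w | i
          · rw [hfa] at hna; simp at hna
          rcases hfa' : f a' with w' | i'
          · rw [hfa'] at hna'; simp at hna'
          apply hfinj
          rw [hfa, hfa']
          simp only [hfa, hfa', Sum.getRight?] at heq
          rw [Option.some_inj.mp heq]
      omega
    have hLR : L.card + (Finset.univ.filter (fun a : ιA => ¬ (f a).isLeft)).card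
        = Fintype.card ιA := by
      rw [hL, Finset.card_filter_add_card_filter_not, Finset.card_univ]
    have hιAcard : Fintype.card ιA = A.ncard := by
      rw [Set.ncard_eq_toFinset_card', Set.toFinset_card]
    have hMle := matching_card_le hMmatch
    omega
  omega

end Konig

theorem stmt_2 {V : Type*} [Fintype V] [DecidableEq V] (G : SimpleGraph V)
    (hBip : ∃ A B : Set V, IsIndep G A ∧ IsIndep G B ∧ A ∪ B = Set.univ ∧ A ∩ B = ∅)
    (v : V) :
    v ∈ core G ↔ matchNum G = matchNum (deleteVert G v) := by
  classical
  obtain ⟨A, B, hA, hB, hU, hI⟩ := hBip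
  have hBip' : ∃ A' B' : Set {u : V // u ≠ v}, IsIndep (deleteVert G v) A' ∧
      IsIndep (deleteVert G v) B' ∧ A' ∪ B' = Set.univ ∧ A' ∩ B' = ∅ := by
    refine ⟨{x | x.1 ∈ A}, {x | x.1 ∈ B \ A}, ?_, ?_, ?_, ?_⟩
    · exact fun u hu w hw hadj => hA u.1 hu w.1 hw hadj
    · exact fun u hu w hw hadj => hB u.1 hu.1 w.1 hw.1 hadj
    · ext x
      simp only [Set.mem_union, Set.mem_setOf_eq, Set.mem_univ, iff_true]
      by_cases hxA : x.1 ∈ A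
      · exact Or.inl hxA
      · right
        refine ⟨?_, hxA⟩
        have : x.1 ∈ A ∪ B := by rw [hU]; trivial
        rcases this with h | h
        · exact absurd h hxA
        · exact h
    · ext x
      simp only [Set.mem_inter_iff, Set.mem_setOf_eq, Set.mem_empty_iff_false, iff_false]
      rintro ⟨h1, h2⟩
      exact h2.2 h1
  have hKE : indepNum G + matchNum G = Fintype.card V :=
    le_antisymm (ke_le G) (konig_ge G ⟨A, B, hA, hB, hU, hI⟩)
  have hKE' : indepNum (deleteVert G v) + matchNum (deleteVert G v)
      = Fintype.card {u : V // u ≠ v} :=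
    le_antisymm (ke_le _) (konig_ge _ hBip')
  have hcard' : Fintype.card {u : V // u ≠ v} + 1 = Fintype.card V := by
    rw [Fintype.card_subtype_compl (p := fun u => u = v), Fintype.card_subtype_eq]
    have h2 : 0 < Fintype.card V := Fintype.card_pos_iff.mpr ⟨v⟩
    omega
  have h1 := alpha_del_le (G := G) (v := v)
  have h2 := alpha_le_alpha_del_succ (G := G) (v := v)
  have hncore := not_core_iff_alpha_del (G := G) (v := v)
  by_cases hc : v ∈ core G
  · simp only [hc, true_iff]
    have : indepNum (deleteVert G v) ≠ indepNum G := fun h => (hncore.mpr h) hc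
    omega
  · simp only [hc, false_iff]
    have := hncore.mp hc
    omega
end

section
/- Let G = (A, B, E) be a finite connected bipartite graph with at least two vertices. Then α(G) = |V(G)|/2 if and only if core(G) = ∅ and both A and B are maximum independent sets of G. -/
lemma indep_le_indepNum {V : Type*} [Fintype V] (G : SimpleGraph V) (s : Set V)
    (hs : IsIndep G s) : s.ncard ≤ indepNum G := by
  classical
  apply Nat.le_findGreatest
  · calc s.ncard ≤ (Set.univ : Set V).ncard :=
        Set.ncard_le_ncard (Set.subset_univ s) Set.finite_univ
      _ = Fintype.card V := by rw [Set.ncard_univ, Nat.card_eq_fintype_card]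
  · exact ⟨s, hs, rfl⟩

theorem stmt_9 {V : Type*} [Fintype V] (G : SimpleGraph V) (A B : Set V)
    (hA : IsIndep G A) (hB : IsIndep G B) (hUnion : A ∪ B = Set.univ)
    (hDisj : A ∩ B = ∅) (hConn : G.Connected) (hCard : 2 ≤ Fintype.card V) :
    2 * indepNum G = Fintype.card V ↔
      core G = ∅ ∧ IsMaxIndep G A ∧ IsMaxIndep G B := by
  have hsum : A.ncard + B.ncard = Fintype.card V := by
    rw [← Set.ncard_union_eq (Set.disjoint_iff_inter_eq_empty.mpr hDisj)
      (Set.toFinite A) (Set.toFinite B), hUnion, Set.ncard_univ,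
      Nat.card_eq_fintype_card]
  have hAle := indep_le_indepNum G A hA
  have hBle := indep_le_indepNum G B hB
  constructor
  · intro h
    have hAcard : A.ncard = indepNum G := by omega
    have hBcard : B.ncard = indepNum G := by omega
    refine ⟨?_, ⟨hA, hAcard⟩, ⟨hB, hBcard⟩⟩
    apply Set.eq_empty_iff_forall_notMem.mpr
    intro v hv
    have hvA := hv A ⟨hA, hAcard⟩
    have hvB := hv B ⟨hB, hBcard⟩
    have : v ∈ A ∩ B := ⟨hvA, hvB⟩
    rw [hDisj] at this
    exact this
  · rintro ⟨-, ⟨-, hAc⟩, ⟨-, hBc⟩⟩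
    omega
end
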